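/- In the λα typing system, Γ ⊢ {yx}∘A is derivable if and only if Γ ⊢ Wy∘(λx.A) is derivable; and Γ ⊢ Sₓ∘A is derivable if and only if Γ ⊢ Wx∘S∘(λx.A) is derivable. -/

import Mathlib

/-! Abstractions, closures `S∘A`, `Wx`, `{yx}` and `Sₓ` are each typed by exactly one rule,
so by generation both sides of each equivalence unfold to the same premises: `Γ = Θ,y` and
`Θ,x ⊢ A` for the first, and `Γ = Γ',x`, `Γ' ⊢ S ▷ Δ'` and `Δ',x ⊢ A` for the second. -/

abbrev Var := ℕ
abbrev Ctx := Finset Var × List Var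

/-- `Γ,x` : extend the local part with `x` as innermost (rightmost) variable.
Lists represent local contexts with head = outermost (leftmost). -/
def Ctx.snoc (Γ : Ctx) (x : Var) : Ctx := (Γ.1, Γ.2 ++ [x])

/-- The least partial order on contexts generated by
`(G,L) < (G ∪ {x}, L)` for `x ∉ G` and `(G,L) < (G \ {x}, x::L)`. -/
inductive CtxLe : Ctx → Ctx → Prop
  | refl (Γ : Ctx) : CtxLe Γ Γ
  | trans {Γ Δ Θ : Ctx} : CtxLe Γ Δ → CtxLe Δ Θ → CtxLe Γ Θ
  | glob (G : Finset Var) (L : List Var) (x : Var) (h : x ∉ G) :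
      CtxLe (G, L) (insert x G, L)
  | loc (G : Finset Var) (L : List Var) (x : Var) :
      CtxLe (G, L) (G.erase x, x :: L)

def Compatible (Γ Δ : Ctx) : Prop := ∃ Θ, CtxLe Γ Θ ∧ CtxLe Δ Θ

mutual
/-- Terms of the calculus λα. -/
inductive Tm : Type
  | var : Var → Tm
  | app : Tm → Tm → Tm
  | lam : Var → Tm → Tm
  | sub : Sb → Tm → Tm
/-- Substitutions of the calculus λα: `[B/x]`, `Wx`, `{yx}`, `Sₓ`. -/
inductive Sb : Type
  | push : Tm → Var → Sb
  | weak : Var → Sb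
  | ren : Var → Var → Sb
  | lift : Sb → Var → Sb
end

mutual
/-- The typing judgement `Γ ⊢ A` of λα (rules R1–R6). -/
inductive Judg : Ctx → Tm → Prop
  | r1 {G : Finset Var} {x : Var} (h : x ∈ G) : Judg (G, []) (.var x)
  | r2 (Γ : Ctx) (x : Var) : Judg (Γ.snoc x) (.var x)
  | r3 {Γ : Ctx} {x y : Var} (h : x ≠ y) : Judg Γ (.var x) → Judg (Γ.snoc y) (.var x)
  | r4 {Γ A B} : Judg Γ A → Judg Γ B → Judg Γ (.app A B)
  | r5 {Γ x A} : Judg (Ctx.snoc Γ x) A → Judg Γ (.lam x A)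
  | r6 {Γ Δ S A} : SJudg Γ S Δ → Judg Δ A → Judg Γ (.sub S A)
/-- The judgement `Γ ⊢ S ▷ Δ` of λα (rules R7–R10). -/
inductive SJudg : Ctx → Sb → Ctx → Prop
  | r7 {Γ B x} : Judg Γ B → SJudg Γ (.push B x) (Γ.snoc x)
  | r8 (Γ x) : SJudg (Ctx.snoc Γ x) (.weak x) Γ
  | r9 (Γ y x) : SJudg (Ctx.snoc Γ y) (.ren y x) (Ctx.snoc Γ x)
  | r10 {Γ Δ S} (x) : SJudg Γ S Δ → SJudg (Ctx.snoc Γ x) (.lift S x) (Ctx.snoc Δ x)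
end

theorem Judg.lam_iff {Γ : Ctx} {x : Var} {A : Tm} :
    Judg Γ (.lam x A) ↔ Judg (Γ.snoc x) A :=
  ⟨fun | .r5 h => h, .r5⟩

theorem Judg.sub_iff {Γ : Ctx} {S : Sb} {A : Tm} :
    Judg Γ (.sub S A) ↔ ∃ Δ, SJudg Γ S Δ ∧ Judg Δ A :=
  ⟨fun | .r6 hS hA => ⟨_, hS, hA⟩, fun ⟨_, hS, hA⟩ => .r6 hS hA⟩

theorem SJudg.weak_iff {Γ Δ : Ctx} {x : Var} :
    SJudg Γ (.weak x) Δ ↔ Γ = Δ.snoc x :=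
  ⟨fun | .r8 _ _ => rfl, fun h => h ▸ .r8 Δ x⟩

theorem SJudg.ren_iff {Γ Δ : Ctx} {y x : Var} :
    SJudg Γ (.ren y x) Δ ↔ ∃ Θ : Ctx, Γ = Θ.snoc y ∧ Δ = Θ.snoc x :=
  ⟨fun | .r9 Θ _ _ => ⟨Θ, rfl, rfl⟩, fun ⟨Θ, hΓ, hΔ⟩ => hΓ ▸ hΔ ▸ .r9 Θ y x⟩

theorem SJudg.lift_iff {Γ Δ : Ctx} {S : Sb} {x : Var} :
    SJudg Γ (.lift S x) Δ ↔ ∃ Γ' Δ' : Ctx, SJudg Γ' S Δ' ∧ Γ = Γ'.snoc x ∧ Δ = Δ'.snoc x :=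
  ⟨fun | .r10 _ h => ⟨_, _, h, rfl, rfl⟩, fun ⟨_, _, h, hΓ, hΔ⟩ => hΓ ▸ hΔ ▸ .r10 x h⟩

/-- `Γ ⊢ {yx}∘A` iff `Γ ⊢ Wy∘(λx.A)`; and `Γ ⊢ Sₓ∘A` iff `Γ ⊢ Wx∘S∘(λx.A)`. -/
theorem judg_ren_lift_iff :
    (∀ (Γ : Ctx) (y x : Var) (A : Tm),
      Judg Γ (.sub (.ren y x) A) ↔ Judg Γ (.sub (.weak y) (.lam x A))) ∧
    (∀ (Γ : Ctx) (S : Sb) (x : Var) (A : Tm),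
      Judg Γ (.sub (.lift S x) A) ↔
        Judg Γ (.sub (.weak x) (.sub S (.lam x A)))) := by
  refine ⟨fun Γ y x A => ?_, fun Γ S x A => ?_⟩
  · simp only [Judg.sub_iff, Judg.lam_iff, SJudg.ren_iff, SJudg.weak_iff]
    constructor
    · rintro ⟨_, ⟨Θ, rfl, rfl⟩, hA⟩
      exact ⟨Θ, rfl, hA⟩
    · rintro ⟨Θ, rfl, hA⟩
      exact ⟨_, ⟨Θ, rfl, rfl⟩, hA⟩
  · simp only [Judg.sub_iff, Judg.lam_iff, SJudg.lift_iff, SJudg.weak_iff]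
    constructor
    · rintro ⟨_, ⟨Γ', Δ', hS, rfl, rfl⟩, hA⟩
      exact ⟨Γ', rfl, Δ', hS, hA⟩
    · rintro ⟨Γ', rfl, Δ', hS, hA⟩
      exact ⟨_, ⟨Γ', Δ', hS, rfl, rfl⟩, hA⟩
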